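/- Let (X,d) be a compact metric space, A ⊂ X a closed subset, ε > 0, and n ≥ 0 an integer. If widim_ε(A,d) ≤ n, then there exists an open neighborhood U of A in X such that widim_ε(U,d) ≤ n. -/

import Mathlib

open scoped ENNReal

/-- An abstract finite simplicial complex on a vertex type `V`: a finite, downward closed
family of nonempty finite sets of vertices. -/
structure FinSimpComplex (V : Type) where
  faces : Finset (Finset V)
  nonempty_of_mem : ∀ s ∈ faces, s.Nonempty
  down_closed : ∀ s ∈ faces, ∀ t ⊆ s, t.Nonempty → t ∈ faces

namespace FinSimpComplex

/-- The geometric realization of `K`: the set of barycentric coordinate functions supported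
on a face of `K`. -/
def space {V : Type} [Fintype V] (K : FinSimpComplex V) : Set (V → ℝ) :=
  {x | (∀ v, 0 ≤ x v) ∧ (∑ v, x v = 1) ∧ ∃ s ∈ K.faces, ∀ v, x v ≠ 0 → v ∈ s}

/-- `K` has dimension at most `n`. -/
def dimLE {V : Type} (K : FinSimpComplex V) (n : ℕ) : Prop :=
  ∀ s ∈ K.faces, s.card ≤ n + 1

/-- The dimension of `K` (with value `0` for the empty complex). -/
def dim {V : Type} (K : FinSimpComplex V) : ℕ :=
  K.faces.sup fun s => s.card - 1

/-- The vertex set of `K`. -/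
def vertexSet {V : Type} [Fintype V] [DecidableEq V] (K : FinSimpComplex V) : Finset V :=
  Finset.univ.filter fun v => {v} ∈ K.faces

/-- The open star of the vertex `v` in the realization of `K`: the union of the interiors of
the simplices containing `v`, i.e. the points whose `v`-th barycentric coordinate is nonzero. -/
def star {V : Type} [Fintype V] (K : FinSimpComplex V) (v : V) : Set ↥K.space :=
  {x | (x : V → ℝ) v ≠ 0}

/-- The full subcomplex of `K` spanned by the vertex set `A`. -/
def fullSub {V : Type} [DecidableEq V] (K : FinSimpComplex V) (A : Finset V) :
    FinSimpComplex V where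
  faces := K.faces.filter fun s => s ⊆ A
  nonempty_of_mem s hs := K.nonempty_of_mem s (Finset.mem_filter.1 hs).1
  down_closed s hs t hts htne := Finset.mem_filter.2
    ⟨K.down_closed s (Finset.mem_filter.1 hs).1 t hts htne,
     hts.trans (Finset.mem_filter.1 hs).2⟩

end FinSimpComplex

/-- The diameter of a set with respect to a distance function `d`, valued in `ℝ≥0∞`. -/
noncomputable def diamOn {X : Type*} (d : X → X → ℝ) (S : Set X) : ℝ≥0∞ :=
  ⨆ x ∈ S, ⨆ y ∈ S, ENNReal.ofReal (d x y)

/-- `f` is an `ε`-embedding w.r.t. `d`: it is continuous and all its fibers have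
`d`-diameter `< ε`. -/
def IsEpsEmbedding {X P : Type*} [TopologicalSpace X] [TopologicalSpace P]
    (d : X → X → ℝ) (ε : ℝ) (f : X → P) : Prop :=
  Continuous f ∧ ∀ p : P, diamOn d (f ⁻¹' {p}) < ENNReal.ofReal ε

/-- The `ε`-width dimension of `X` w.r.t. `d`: the minimal integer `n ≥ 0` such that there is
an `ε`-embedding of `X` into some at most `n`-dimensional finite simplicial complex
(`⊤` if no such embedding exists). -/
noncomputable def widim (X : Type*) [TopologicalSpace X] (d : X → X → ℝ) (ε : ℝ) : ℝ≥0∞ :=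
  sInf {r : ℝ≥0∞ | ∃ n : ℕ, (n : ℝ≥0∞) = r ∧
    ∃ (k : ℕ) (K : FinSimpComplex (Fin k)) (f : X → ↥K.space),
      K.dimLE n ∧ IsEpsEmbedding d ε f}

/-- The dynamical distance `d_N(x,y) = max_{0 ≤ n < N} d(Tⁿx, Tⁿy)`. -/
noncomputable def dynDist {X : Type*} (d : X → X → ℝ) (T : X → X) (N : ℕ) (x y : X) : ℝ :=
  (Finset.range N).fold max 0 fun n => d (T^[n] x) (T^[n] y)

/-- The mean dimension `mdim(X,T) = lim_{ε→0} lim_{N→∞} widim_ε(X,d_N)/N`; the limit in `N`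
exists and equals the infimum by subadditivity, and the limit in `ε` is the supremum
by monotonicity. -/
noncomputable def mdim (X : Type*) [TopologicalSpace X] (d : X → X → ℝ) (T : X → X) : ℝ≥0∞ :=
  ⨆ (ε : ℝ) (_ : 0 < ε), ⨅ (N : ℕ) (_ : 0 < N), widim X (dynDist d T N) ε / (N : ℝ≥0∞)

/-- The relative mean dimension of a factor map `π`:
`mdim(π,T) = lim_{ε→0} lim_{N→∞} (sup_y widim_ε(π⁻¹(y), d_N))/N`. -/
noncomputable def mdimRel {X Y : Type*} [TopologicalSpace X] (d : X → X → ℝ)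
    (T : X → X) (π : X → Y) : ℝ≥0∞ :=
  ⨆ (ε : ℝ) (_ : 0 < ε), ⨅ (N : ℕ) (_ : 0 < N),
    (⨆ y : Y, widim ↥(π ⁻¹' {y}) (fun a b => dynDist d T N a.1 b.1) ε) / (N : ℝ≥0∞)

/-- The upper mean dimension of a subset `A ⊆ X`:
`lim_{ε→0} limsup_{N→∞} widim_ε(A,d_N)/N`. -/
noncomputable def umdim {X : Type*} [TopologicalSpace X] (d : X → X → ℝ) (T : X → X)
    (A : Set X) : ℝ≥0∞ :=
  ⨆ (ε : ℝ) (_ : 0 < ε),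
    Filter.limsup (fun N : ℕ =>
      widim ↥A (fun a b => dynDist d T N a.1 b.1) ε / (N : ℝ≥0∞)) Filter.atTop

/-- The lower mean dimension of a subset `A ⊆ X`:
`lim_{ε→0} liminf_{N→∞} widim_ε(A,d_N)/N`. -/
noncomputable def lmdim {X : Type*} [TopologicalSpace X] (d : X → X → ℝ) (T : X → X)
    (A : Set X) : ℝ≥0∞ :=
  ⨆ (ε : ℝ) (_ : 0 < ε),
    Filter.liminf (fun N : ℕ =>
      widim ↥A (fun a b => dynDist d T N a.1 b.1) ε / (N : ℝ≥0∞)) Filter.atTop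

/-- A factor map between dynamical systems: a continuous equivariant surjection. -/
structure IsFactorMap {X Y : Type*} [TopologicalSpace X] [TopologicalSpace Y]
    (T : X → X) (S : Y → Y) (π : X → Y) : Prop where
  continuous : Continuous π
  surjective : Function.Surjective π
  equivariant : ∀ x, π (T x) = S (π x)

/-- The orbit capacity `ocap(A) = lim_{N→∞} (1/N) sup_x Σ_{n<N} 1_A(Tⁿx)`; the limit exists
and equals the infimum by subadditivity. -/
noncomputable def ocap {X : Type*} (T : X → X) (A : Set X) : ℝ≥0∞ :=
  ⨅ (N : ℕ) (_ : 0 < N),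
    (⨆ x : X, ∑ n ∈ Finset.range N, A.indicator (fun _ => (1 : ℝ≥0∞)) (T^[n] x)) / (N : ℝ≥0∞)

/-- The small boundary property. -/
def SmallBoundaryProperty {Y : Type*} [TopologicalSpace Y] (S : Y → Y) : Prop :=
  ∀ y : Y, ∀ U : Set Y, IsOpen U → y ∈ U →
    ∃ V : Set Y, IsOpen V ∧ y ∈ V ∧ V ⊆ U ∧ ocap S (frontier V) = 0

/-- `d` is a metric on `X` compatible with the given topology. -/
def IsCompatibleMetric {X : Type*} [t : TopologicalSpace X] (d : X → X → ℝ) : Prop :=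
  ∃ m : MetricSpace X,
    m.toPseudoMetricSpace.toUniformSpace.toTopologicalSpace = t ∧
    ∀ x y, @dist X m.toPseudoMetricSpace.toDist x y = d x y

/-
Extend the `ε`-embedding `f : A → |K|` to a map `X → ℝᵏ` by Tietze and push it back into `|K|`
with a retraction of a neighbourhood of `|K|`; this gives a continuous `F` on an open `O ⊇ A`
agreeing with `f` on `A`. The pairs `(x, y) ∈ O × O` with `F x = F y → d(x, y) < c` form an
open set, increasing in `c`; by compactness one `c < ε` already covers `A × A`, and the tube
lemma then yields a neighbourhood `U` of `A` on which the fibres of `F` have diameter `≤ c < ε`.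
-/

open Metric Set

namespace FinSimpComplex

theorem dimLE.mono {V : Type} {K : FinSimpComplex V} {m n : ℕ} (hK : K.dimLE m) (hmn : m ≤ n) :
    K.dimLE n :=
  fun s hs => (hK s hs).trans (by omega)

variable {k : ℕ} (K : FinSimpComplex (Fin k))

theorem isClosed_space : IsClosed K.space := by
  have h : K.space = ⋃ s ∈ K.faces, stdSimplex ℝ (Fin k) ∩ ⋂ v ∉ s, {x | x v = 0} := by
    ext x
    simp only [space, stdSimplex, mem_iUnion, mem_inter_iff, mem_iInter, mem_ofPred_eq,
      exists_prop, not_imp_comm (a := x _ = 0)]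
    tauto
  rw [h]
  exact isClosed_biUnion_finset fun s _ => (isClosed_stdSimplex ℝ (Fin k)).inter
    (isClosed_biInter fun v _ => isClosed_eq (continuous_apply v) continuous_const)

noncomputable def truncate (x : Fin k → ℝ) : Fin k → ℝ :=
  fun v => max (x v - infDist x K.space) 0

noncomputable def retraction (x : Fin k → ℝ) : Fin k → ℝ :=
  fun v => K.truncate x v / ∑ w, K.truncate x w

theorem continuous_truncate : Continuous K.truncate :=
  continuous_pi fun v => ((continuous_apply v).sub (continuous_infDist_pt _)).max continuous_const

theorem truncate_of_mem {x : Fin k → ℝ} (hx : x ∈ K.space) : K.truncate x = x :=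
  funext fun v => by simp only [truncate, infDist_zero_of_mem hx, sub_zero, max_eq_left (hx.1 v)]

/-- If `y` is a point of `K.space` nearest to `x`, the coordinates of `x` outside the support of
`y` are at most `d(x, y)`, so truncation kills them, while on the support of `y` the truncated
coordinates are at least `y v - 2 d(x, y)`, which sum to at least `1 - 2k d(x, y)`. -/
theorem exists_face_truncate (hne : K.space.Nonempty) {x : Fin k → ℝ}
    (hx : 2 * k * infDist x K.space < 1) :
    ∃ s ∈ K.faces, (∀ v, K.truncate x v ≠ 0 → v ∈ s) ∧ 0 < ∑ w, K.truncate x w := by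
  obtain ⟨y, ⟨-, hy, s, hs, hys⟩, hxy⟩ := K.isClosed_space.exists_infDist_eq_dist hne x
  have hclose : ∀ v, |x v - y v| ≤ infDist x K.space := fun v => by
    rw [hxy, ← Real.dist_eq]; exact dist_le_pi_dist x y v
  refine ⟨s, hs, fun v hv => ?_, ?_⟩
  · by_contra hvs
    have hyv : y v = 0 := by_contra fun h => hvs (hys v h)
    exact hv (max_eq_right (by linarith [le_abs_self (x v - y v), hclose v]))
  · have hy_s : ∑ w ∈ s, y w = 1 :=
      hy ▸ Finset.sum_subset s.subset_univ fun w _ hw => by_contra fun h => hw (hys w h)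
    have hcard : (s.card : ℝ) ≤ k := by exact_mod_cast (card_finset_fin_le s)
    have hD : 0 ≤ infDist x K.space := infDist_nonneg
    calc 0 < 1 - s.card * (2 * infDist x K.space) := by nlinarith
      _ = ∑ w ∈ s, (y w - 2 * infDist x K.space) := by
        rw [Finset.sum_sub_distrib, hy_s, Finset.sum_const, nsmul_eq_mul]
      _ ≤ ∑ w ∈ s, K.truncate x w := Finset.sum_le_sum fun w _ =>
        le_max_of_le_left (by linarith [neg_abs_le (x w - y w), hclose w])
      _ ≤ ∑ w, K.truncate x w :=
        Finset.sum_le_sum_of_subset_of_nonneg s.subset_univ fun w _ _ => le_max_right _ _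

theorem retraction_of_mem {x : Fin k → ℝ} (hx : x ∈ K.space) : K.retraction x = x :=
  funext fun v => by simp [retraction, K.truncate_of_mem hx, hx.2.1]

theorem retraction_mem (hne : K.space.Nonempty) {x : Fin k → ℝ}
    (hx : 2 * k * infDist x K.space < 1) : K.retraction x ∈ K.space := by
  obtain ⟨s, hs, hsupp, hpos⟩ := K.exists_face_truncate hne hx
  refine ⟨fun v => div_nonneg (le_max_right _ _) hpos.le, ?_, s, hs, fun v hv => hsupp v ?_⟩
  · simp only [retraction, ← Finset.sum_div, div_self hpos.ne']
  · rintro h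
    simp [retraction, h] at hv

theorem continuousOn_retraction (hne : K.space.Nonempty) :
    ContinuousOn K.retraction {x | 2 * k * infDist x K.space < 1} :=
  continuousOn_pi.2 fun v => ContinuousOn.div
    ((continuous_apply v).comp K.continuous_truncate).continuousOn
    (continuous_finsetSum _ fun w _ =>
      (continuous_apply w).comp K.continuous_truncate).continuousOn
    fun _ hx => (K.exists_face_truncate hne hx).choose_spec.2.2.ne'

theorem exists_retraction_nhds :
    ∃ N : Set (Fin k → ℝ), IsOpen N ∧ K.space ⊆ N ∧ ∃ r : (Fin k → ℝ) → Fin k → ℝ,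
      ContinuousOn r N ∧ MapsTo r N K.space ∧ EqOn r id K.space := by
  rcases K.space.eq_empty_or_nonempty with h | hne
  · exact ⟨∅, isOpen_empty, h.subset, id, continuousOn_empty _, mapsTo_empty _ _,
      h ▸ eqOn_empty _ _⟩
  refine ⟨{x | 2 * k * infDist x K.space < 1},
    isOpen_lt (continuous_const.mul (continuous_infDist_pt _)) continuous_const,
    fun x hx => ?_, K.retraction, K.continuousOn_retraction hne,
    fun x hx => K.retraction_mem hne hx, fun x hx => K.retraction_of_mem hx⟩
  simp [infDist_zero_of_mem hx]

theorem exists_extension_nhds {X : Type*} [TopologicalSpace X] [NormalSpace X] {A : Set X}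
    (hA : IsClosed A) {f : A → K.space} (hf : Continuous f) :
    ∃ O : Set X, IsOpen O ∧ A ⊆ O ∧ ∃ F : X → Fin k → ℝ,
      ContinuousOn F O ∧ MapsTo F O K.space ∧ ∀ a : A, F a = f a := by
  obtain ⟨N, hN, hKN, r, hr, hrK, hrid⟩ := K.exists_retraction_nhds
  obtain ⟨g, hg⟩ := ContinuousMap.exists_restrict_eq hA
    ⟨fun a => (f a : Fin k → ℝ), continuous_subtype_val.comp hf⟩
  have hgf : ∀ a : A, g a = f a := fun a => DFunLike.congr_fun hg a
  refine ⟨g ⁻¹' N, hN.preimage g.continuous, fun a ha => ?_, r ∘ g,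
    hr.comp g.continuous.continuousOn (mapsTo_preimage _ _), fun _ hx => hrK hx, fun a => ?_⟩
  · exact hKN (hgf ⟨a, ha⟩ ▸ (f _).2)
  · simp [hgf a, hrid (f a).2]

end FinSimpComplex

theorem isOpen_setOf_eq_imp_dist_lt {X P : Type*} [PseudoMetricSpace X] [TopologicalSpace P]
    [T2Space P] {O : Set X} (hO : IsOpen O) {F : X → P} (hF : ContinuousOn F O) (c : ℝ) :
    IsOpen {p : X × X | p.1 ∈ O ∧ p.2 ∈ O ∧ (F p.1 = F p.2 → dist p.1 p.2 < c)} := by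
  have hne : IsOpen (O ×ˢ O ∩ Prod.map F F ⁻¹' (diagonal P)ᶜ) :=
    (hF.prodMap hF).isOpen_inter_preimage (hO.prod hO) isClosed_diagonal.isOpen_compl
  have hlt : IsOpen (O ×ˢ O ∩ {p | dist p.1 p.2 < c}) :=
    (hO.prod hO).inter (isOpen_lt continuous_dist continuous_const)
  convert hne.union hlt using 1
  ext p
  simp only [mem_ofPred_eq, mem_union, mem_inter_iff, mem_prod, mem_preimage, mem_compl_iff,
    mem_diagonal_iff, Prod.map_fst, Prod.map_snd]
  tauto

theorem exists_isOpen_superset_dist_lt_of_eq {X P : Type*} [PseudoMetricSpace X]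
    [TopologicalSpace P] [T2Space P] {A O : Set X} (hA : IsCompact A) (hO : IsOpen O)
    (hAO : A ⊆ O) {F : X → P} (hF : ContinuousOn F O) {ε : ℝ}
    (hFA : ∀ x ∈ A, ∀ y ∈ A, F x = F y → dist x y < ε) :
    ∃ c < ε, ∃ U : Set X, IsOpen U ∧ A ⊆ U ∧ U ⊆ O ∧
      ∀ x ∈ U, ∀ y ∈ U, F x = F y → dist x y < c := by
  set Ω : ℝ → Set (X × X) :=
    fun c => {p | p.1 ∈ O ∧ p.2 ∈ O ∧ (F p.1 = F p.2 → dist p.1 p.2 < c)}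
  have hΩ_mono : Monotone Ω := fun c c' hcc' p ⟨hp₁, hp₂, hp⟩ =>
    ⟨hp₁, hp₂, fun h => (hp h).trans_le hcc'⟩
  have hcover : A ×ˢ A ⊆ ⋃ c : Iio ε, Ω c := by
    rintro ⟨x, y⟩ ⟨hx, hy⟩
    by_cases hxy : F x = F y
    · obtain ⟨c, hxc, hcε⟩ := exists_between (hFA x hx y hy hxy)
      exact mem_iUnion.2 ⟨⟨c, hcε⟩, hAO hx, hAO hy, fun _ => hxc⟩
    · exact mem_iUnion.2 ⟨⟨ε - 1, by simp⟩, hAO hx, hAO hy, fun h => absurd h hxy⟩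
  have : Nonempty (Iio ε) := nonempty_Iio.to_subtype
  obtain ⟨⟨c, hcε⟩, hAc⟩ := (hA.prod hA).elim_directed_cover (fun c : Iio ε => Ω c)
    (fun c => isOpen_setOf_eq_imp_dist_lt hO hF c) hcover
    (hΩ_mono.comp (Subtype.mono_coe _)).directed_le
  obtain ⟨u, v, hu, hv, hAu, hAv, huv⟩ :=
    generalized_tube_lemma hA hA (isOpen_setOf_eq_imp_dist_lt hO hF c) hAc
  exact ⟨c, hcε, u ∩ v, hu.inter hv, subset_inter hAu hAv,
    fun x hx => (huv (mk_mem_prod hx.1 hx.2)).1, fun x hx y hy => (huv (mk_mem_prod hx.1 hy.2)).2.2⟩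

theorem le_diamOn {X : Type*} (d : X → X → ℝ) {S : Set X} {x y : X} (hx : x ∈ S) (hy : y ∈ S) :
    ENNReal.ofReal (d x y) ≤ diamOn d S :=
  le_iSup₂_of_le x hx (le_iSup₂ (f := fun y (_ : y ∈ S) => ENNReal.ofReal (d x y)) y hy)

theorem IsEpsEmbedding.lt_of_eq {X P : Type*} [TopologicalSpace X] [TopologicalSpace P]
    {d : X → X → ℝ} {ε : ℝ} {f : X → P} (hf : IsEpsEmbedding d ε f) {x y : X}
    (hxy : f x = f y) : d x y < ε :=
  (ENNReal.ofReal_lt_ofReal_iff'.1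
    ((le_diamOn d (S := f ⁻¹' {f y}) hxy rfl).trans_lt (hf.2 (f y)))).1

theorem isEpsEmbedding_of_le {X P : Type*} [TopologicalSpace X] [TopologicalSpace P]
    {d : X → X → ℝ} {ε c : ℝ} {f : X → P} (hf : Continuous f) (hε : 0 < ε) (hc : c < ε)
    (hfib : ∀ x y, f x = f y → d x y ≤ c) : IsEpsEmbedding d ε f :=
  ⟨hf, fun _ => (iSup₂_le fun x hx => iSup₂_le fun y hy =>
    ENNReal.ofReal_le_ofReal (hfib x y (hx.trans hy.symm))).trans_lt
      ((ENNReal.ofReal_lt_ofReal_iff hε).2 hc)⟩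

theorem widim_le_of_isEpsEmbedding {X : Type*} [TopologicalSpace X] {d : X → X → ℝ} {ε : ℝ}
    {k n : ℕ} {K : FinSimpComplex (Fin k)} {f : X → K.space} (hK : K.dimLE n)
    (hf : IsEpsEmbedding d ε f) : widim X d ε ≤ n :=
  sInf_le ⟨n, rfl, k, K, f, hK, hf⟩

theorem exists_isEpsEmbedding_of_widim_le {X : Type*} [TopologicalSpace X] {d : X → X → ℝ}
    {ε : ℝ} {n : ℕ} (h : widim X d ε ≤ n) :
    ∃ (k : ℕ) (K : FinSimpComplex (Fin k)) (f : X → K.space),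
      K.dimLE n ∧ IsEpsEmbedding d ε f := by
  obtain ⟨_, ⟨m, rfl, k, K, f, hK, hf⟩, hm⟩ :=
    sInf_lt_iff.1 (h.trans_lt (Nat.cast_lt.2 n.lt_succ_self))
  exact ⟨k, K, f, hK.mono (Nat.lt_succ_iff.1 (Nat.cast_lt.1 hm)), hf⟩

/-- **Claim 2.3.** Let `(X,d)` be a compact metric space, `A ⊆ X` closed, `ε > 0` and `n ≥ 0`.
If `widim_ε(A,d) ≤ n` then there is an open neighborhood `U` of `A` with `widim_ε(U,d) ≤ n`. -/
theorem widim_open_neighborhood {X : Type*} [MetricSpace X] [CompactSpace X]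
    (A : Set X) (hA : IsClosed A) (ε : ℝ) (hε : 0 < ε) (n : ℕ)
    (h : widim ↥A (fun a b => dist (a : X) (b : X)) ε ≤ (n : ℝ≥0∞)) :
    ∃ U : Set X, IsOpen U ∧ A ⊆ U ∧
      widim ↥U (fun a b => dist (a : X) (b : X)) ε ≤ (n : ℝ≥0∞) := by
  obtain ⟨k, K, f, hK, hf⟩ := exists_isEpsEmbedding_of_widim_le h
  obtain ⟨O, hO, hAO, F, hFO, hFK, hFf⟩ := K.exists_extension_nhds hA hf.1
  have hFA : ∀ x ∈ A, ∀ y ∈ A, F x = F y → dist x y < ε := fun x hx y hy hxy =>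
    hf.lt_of_eq (x := ⟨x, hx⟩) (y := ⟨y, hy⟩) (Subtype.ext (by rw [← hFf, ← hFf]; exact hxy))
  obtain ⟨c, hcε, U, hU, hAU, hUO, hUc⟩ :=
    exists_isOpen_superset_dist_lt_of_eq hA.isCompact hO hAO hFO hFA
  refine ⟨U, hU, hAU, widim_le_of_isEpsEmbedding hK
    (f := fun u : U => ⟨F u, hFK (hUO u.2)⟩) (isEpsEmbedding_of_le ?_ hε hcε ?_)⟩
  · exact (hFO.mono hUO).domRestrict.subtype_mk _
  · exact fun u w huw => (hUc u u.2 w w.2 (congrArg Subtype.val huw)).le
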